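/- arXiv:2512.22797 — 5 statements merged into one kernel-verified Lean document; each statement's English description precedes it below -/
import Mathlib

section
/- In a 3-crossed module, the left-Homanian and right-Homanian vanish whenever any argument is the unit: {h3,h2,h1} = e_M and {h3,h2,h1}' = e_M if any of h1, h2, h3 equals e_H. -/
/-- A 3-crossed module `M → L → H → G` in the sense of the paper (Definition 4.1),
with four groups, the boundary maps, the actions of `G` on `H, L, M`, of `H` on `L, M`,
of `L` on `M`, the Peiffer lifting, the left and right Homanians, the HL- and
HL'-Peiffer liftings and the LL-Peiffer lifting, subject to the 32 axioms. -/
structure ThreeCrossedModule (G H L M : Type*) [Group G] [Group H] [Group L] [Group M] where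
  /-- the boundary map `∂ : H → G` -/
  dH : H →* G
  /-- the boundary map `∂ : L → H` -/
  dL : L →* H
  /-- the boundary map `∂ : M → L` -/
  dM : M →* L
  /-- left action of `G` by automorphisms on `H` -/
  aGH : G →* MulAut H
  /-- left action of `G` by automorphisms on `L` -/
  aGL : G →* MulAut L
  /-- left action of `G` by automorphisms on `M` -/
  aGM : G →* MulAut M
  /-- left action of `H` by automorphisms on `L` -/
  aHL : H →* MulAut L
  /-- left action of `H` by automorphisms on `M` -/
  aHM : H →* MulAut M
  /-- left action of `L` by automorphisms on `M` -/
  aLM : L →* MulAut M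
  /-- the Peiffer lifting `{-,-} : H × H → L` -/
  pf : H → H → L
  /-- the left-Homanian `{-,-,-} : H × H × H → M` -/
  lh : H → H → H → M
  /-- the right-Homanian `{-,-,-}' : H × H × H → M` -/
  rh : H → H → H → M
  /-- the HL-Peiffer lifting `{-,-}_HL : H × L → M` -/
  hl : H → L → M
  /-- the HL'-Peiffer lifting `{-,-}'_HL : H × L → M` -/
  hl' : H → L → M
  /-- the LL-Peiffer lifting `{-,-}_LL : L × L → M` -/
  ll : L → L → M
  -- (2)
  comp_LH_eq_one : ∀ l : L, dH (dL l) = 1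
  comp_ML_eq_one : ∀ m : M, dL (dM m) = 1
  -- (3)
  dH_equivariant : ∀ (g : G) (h : H), dH (aGH g h) = g * dH h * g⁻¹
  dL_equivariant_G : ∀ (g : G) (l : L), dL (aGL g l) = aGH g (dL l)
  dM_equivariant_G : ∀ (g : G) (m : M), dM (aGM g m) = aGL g (dM m)
  -- (4)
  dL_equivariant_H : ∀ (h : H) (l : L), dL (aHL h l) = h * dL l * h⁻¹
  dM_equivariant_H : ∀ (h : H) (m : M), dM (aHM h m) = aHL h (dM m)
  -- (5)
  dM_equivariant_L : ∀ (l : L) (m : M), dM (aLM l m) = l * dM m * l⁻¹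
  -- (6)
  pf_equivariant : ∀ (g : G) (h₂ h₁ : H), aGL g (pf h₂ h₁) = pf (aGH g h₂) (aGH g h₁)
  -- (7)
  lh_equivariant : ∀ (g : G) (h₃ h₂ h₁ : H),
    aGM g (lh h₃ h₂ h₁) = lh (aGH g h₃) (aGH g h₂) (aGH g h₁)
  rh_equivariant : ∀ (g : G) (h₃ h₂ h₁ : H),
    aGM g (rh h₃ h₂ h₁) = rh (aGH g h₃) (aGH g h₂) (aGH g h₁)
  -- (8)
  ll_equivariant_G : ∀ (g : G) (l₂ l₁ : L), aGM g (ll l₂ l₁) = ll (aGL g l₂) (aGL g l₁)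
  -- (9)
  ll_equivariant_H : ∀ (h : H) (l₂ l₁ : L), aHM h (ll l₂ l₁) = ll (aHL h l₂) (aHL h l₁)
  -- (10)
  act_dM : ∀ m m' : M, aLM (dM m) m' = m * m' * m⁻¹
  -- (11)
  dM_hl : ∀ (h : H) (l : L), dM (hl h l) * aHL h l = l * pf (dL l)⁻¹ h
  -- (12)
  dM_hl' : ∀ (h : H) (l : L), dM (hl' h l) * aGL (dH h) l = aHL h l * pf h (dL l)⁻¹
  -- (13)
  hl_equivariant : ∀ (g : G) (h : H) (l : L), aGM g (hl h l) = hl (aGH g h) (aGL g l)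
  hl'_equivariant : ∀ (g : G) (h : H) (l : L), aGM g (hl' h l) = hl' (aGH g h) (aGL g l)
  -- (14)
  act_H_M : ∀ (h : H) (m : M), aHM h m = m * hl h (dM m)⁻¹
  -- (15)
  dM_ll : ∀ l l' : L, dM (ll l l') * aHL (dL l) l' = l * l' * l⁻¹
  -- (16)
  ll_mul_left : ∀ l₃ l₂ l₁ : L,
    ll (l₃ * l₂) l₁ = aLM l₃ (ll l₂ l₁) * ll l₃ (aHL (dL l₂) l₁)
  -- (17)
  ll_mul_right : ∀ l₃ l₂ l₁ : L,
    ll l₃ (l₂ * l₁) = ll l₃ l₂ * aLM (aHL (dL l₃) l₂) (ll l₃ l₁)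
  -- (18)
  act_dH_M : ∀ (h : H) (m : M), aGM (dH h) m = aHM h m * hl' h (dM m)⁻¹
  -- (19)
  pf_mul_left : ∀ h₃ h₂ h₁ : H,
    pf (h₃ * h₂) h₁ = dM (lh h₃ h₂ h₁) * aHL h₃ (pf h₂ h₁) * pf h₃ (aGH (dH h₂) h₁)
  -- (20)
  pf_mul_right : ∀ h₃ h₂ h₁ : H,
    pf h₃ (h₂ * h₁) = dM (rh h₃ h₂ h₁) * pf h₃ h₂ * aHL (aGH (dH h₃) h₂) (pf h₃ h₁)
  -- (21)
  hl_mul_left : ∀ (h₂ h₁ : H) (l : L),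
    hl (h₂ * h₁) l = aLM l (rh (dL l)⁻¹ h₂ h₁) * hl h₂ l * aHM h₂ (hl h₁ l)
  -- (22)
  hl_mul_right : ∀ (h : H) (l₂ l₁ : L),
    hl h (l₂ * l₁) = aLM (l₂ * l₁) (lh (dL l₁)⁻¹ (dL l₂)⁻¹ h)
      * (aLM (l₂ * l₁) (ll l₁⁻¹ (pf (dL l₂)⁻¹ h)))⁻¹
      * hl h l₂ * aLM (aHL h l₂) (hl h l₁)
  -- (23)
  hl'_mul_left : ∀ (h₂ h₁ : H) (l : L),
    hl' (h₂ * h₁) l = aLM (aHL (h₂ * h₁) l) (lh h₂ h₁ (dL l)⁻¹)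
      * aHM h₂ (hl' h₁ l) * hl' h₂ (aGL (dH h₁) l)
  -- (24)
  hl'_mul_right : ∀ (h : H) (l₂ l₁ : L),
    hl' h (l₂ * l₁) = aLM (aHL h (l₂ * l₁)) (rh h (dL l₁)⁻¹ (dL l₂)⁻¹)
      * aLM (aHL h l₂) (hl' h l₁)
      * (aLM (aHL h l₂ * aGL (dH h) l₁) (ll (aGL (dH h) l₁)⁻¹ (pf h (dL l₂)⁻¹)))⁻¹
      * hl' h l₁
  -- (25)
  lh_exchange : ∀ h₄ h₃ h₂ h₁ : H,
    lh (h₄ * h₃) h₂ h₁ * aLM (aHL (h₄ * h₃) (pf h₂ h₁)) (lh h₄ h₃ (aGH (dH h₂) h₁))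
      = lh h₄ (h₃ * h₂) h₁ * aHM h₄ (lh h₃ h₂ h₁)
  -- (26)
  rh_exchange : ∀ h₄ h₃ h₂ h₁ : H,
    rh h₄ (h₃ * h₂) h₁ * rh h₄ h₃ h₂
      = rh h₄ h₃ (h₂ * h₁) * aLM (pf h₄ h₃) (aHM (aGH (dH h₄) h₃) (rh h₄ h₂ h₁))
  -- (27)
  lh_rh_exchange : ∀ h₄ h₃ h₂ h₁ : H,
    lh h₄ h₃ (h₂ * h₁)
      * aLM (aHL h₄ (pf h₃ (h₂ * h₁))) (rh h₄ (aGH (dH h₃) h₂) (aGH (dH h₃) h₁))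
      * aHM h₄ (rh h₃ h₂ h₁)
      = rh (h₄ * h₃) h₂ h₁
        * aLM (pf (h₄ * h₃) h₂) (aHM (aGH (dH (h₄ * h₃)) h₂) (lh h₄ h₃ h₁))
        * lh h₄ h₃ h₂
        * aLM (aHL h₄ (pf h₃ h₂))
            (ll (pf h₄ (aGH (dH h₃) h₂)) (aHL (aGH (dH (h₄ * h₃)) h₂ * h₄) (pf h₃ h₁)))
  -- (28)
  homanian_pf_compat : ∀ h₃ h₂ h₁ : H,
    aLM (aHL h₃ (pf h₂ h₁))
        ((rh h₃ (aGH (dH h₂) h₁) h₂)⁻¹ * rh h₃ (dL (pf h₂ h₁))⁻¹ (h₂ * h₁))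
      * hl' h₃ (pf h₂ h₁)
      * ll (aGL (dH h₃) (pf h₂ h₁))
          (aHL (dL (aGL (dH h₃) (pf h₂ h₁)))⁻¹ (pf h₃ (h₂ * h₁)))
      * rh h₃ h₂ h₁
      = (lh h₃ h₂ h₁)⁻¹
        * (aLM (pf (h₃ * h₂) h₁) (hl (aGH (dH (h₃ * h₂)) h₁) (pf h₃ h₂)))⁻¹
        * (ll (pf h₃ h₂) (aHL (dL (pf h₃ h₂))⁻¹ (pf (h₃ * h₂) h₁)))⁻¹
        * aLM (pf h₃ h₂)
            ((lh (dL (pf h₃ h₂))⁻¹ (h₃ * h₂) h₁)⁻¹ * lh (aGH (dH h₃) h₂) h₃ h₁)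
  -- (29)
  hl_hl'_ll_compat : ∀ l l' : L,
    aLM l (hl (dL l') l⁻¹) * aLM (l * l' * l⁻¹ * l'⁻¹) (ll l' l)
      = aLM (aHL (dL l) l') (hl' (dL l) l'⁻¹) * (ll l l')⁻¹
  -- (30)
  ll_dM_hl : ∀ (l : L) (m : M), ll (dM m) l * ll l (dM m) = hl (dL l) (dM m)
  hl_dM_hl' : ∀ (l : L) (m : M), hl (dL l) (dM m) = (hl' (dL l) (dM m))⁻¹
  -- (31)
  ll_dM_dM : ∀ m m' : M, ll (dM m) (dM m') = m * m' * m⁻¹ * m'⁻¹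


namespace ThreeCrossedModule

variable {G H L M : Type*} [Group G] [Group H] [Group L] [Group M]
variable (T : ThreeCrossedModule G H L M)

lemma hl_one (h : H) : T.hl h 1 = 1 := by
  have := T.act_H_M h 1
  simpa using this.symm

lemma hl'_one (h : H) : T.hl' h 1 = 1 := by
  have := T.act_dH_M h 1
  simpa using this.symm

lemma ll_one_left (l : L) : T.ll 1 l = 1 := by
  have := T.ll_mul_left 1 1 l
  simp only [mul_one, one_mul, map_one, MulAut.one_apply] at this
  exact left_eq_mul.mp this

lemma lh_one₁ (h₂ h₁ : H) : T.lh h₂ h₁ 1 = 1 := by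
  have := T.hl'_mul_left h₂ h₁ 1
  simpa [T.hl'_one, map_one, MulAut.one_apply] using this.symm

lemma rh_one₃ (h₂ h₁ : H) : T.rh 1 h₂ h₁ = 1 := by
  have := T.hl_mul_left h₂ h₁ 1
  simpa [T.hl_one, map_one, MulAut.one_apply] using this.symm

lemma lh_one_one (h : H) : T.lh 1 1 h = 1 := by
  have := T.hl_mul_right h 1 1
  simpa [T.hl_one, T.ll_one_left, map_one, MulAut.one_apply] using this.symm

lemma lh_one₃ (h₂ h₁ : H) : T.lh 1 h₂ h₁ = 1 := by
  have := T.lh_exchange 1 1 h₂ h₁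
  simp only [one_mul, mul_one, map_one, MulAut.one_apply, T.lh_one_one] at this
  exact left_eq_mul.mp this

lemma lh_one₂ (h₃ h₁ : H) : T.lh h₃ 1 h₁ = 1 := by
  have := T.lh_exchange h₃ 1 1 h₁
  simp only [one_mul, mul_one, map_one, MulAut.one_apply, T.lh_one_one] at this
  have h2 := left_eq_mul.mp this.symm
  simpa using h2

lemma rh_one_one (h : H) : T.rh h 1 1 = 1 := by
  have := T.hl'_mul_right h 1 1
  simpa [T.hl'_one, T.ll_one_left, map_one, MulAut.one_apply] using this.symm

lemma rh_one₂ (h₃ h₁ : H) : T.rh h₃ 1 h₁ = 1 := by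
  have := T.rh_exchange h₃ 1 1 h₁
  simp only [one_mul, mul_one, map_one, MulAut.one_apply, T.rh_one_one] at this
  have h2 := left_eq_mul.mp this
  simpa using h2

lemma rh_one₁ (h₃ h₂ : H) : T.rh h₃ h₂ 1 = 1 := by
  have := T.rh_exchange h₃ h₂ 1 1
  simp only [one_mul, mul_one, map_one, MulAut.one_apply, T.rh_one₂] at this
  exact left_eq_mul.mp this.symm

end ThreeCrossedModule

/-- In a 3-crossed module, the left- and right-Homanians vanish whenever any
argument is the unit element of `H`. -/
theorem threeCrossedModule_homanian_unit {G H L M : Type*} [Group G] [Group H] [Group L] [Group M]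
    (T : ThreeCrossedModule G H L M) :
    ∀ h₃ h₂ h₁ : H, (h₃ = 1 ∨ h₂ = 1 ∨ h₁ = 1) →
      T.lh h₃ h₂ h₁ = 1 ∧ T.rh h₃ h₂ h₁ = 1 := by
  rintro h₃ h₂ h₁ (rfl | rfl | rfl)
  · exact ⟨T.lh_one₃ h₂ h₁, T.rh_one₃ h₂ h₁⟩
  · exact ⟨T.lh_one₂ h₃ h₁, T.rh_one₂ h₃ h₁⟩
  · exact ⟨T.lh_one₁ h₃ h₂, T.rh_one₁ h₃ h₂⟩
end

section
/- Let W be a 2-crossed module and let (g, h) satisfy the 2-simplex cocycle condition g_{ik} = ∂(h_{ijk}) g_{jk} g_{ij} for a horn Λ³₂ (all faces except 013 given, with l-labels trivial). Then defining h₀₁₃ := h₀₂₃ · ^{g₂₃}h₀₁₂ · h₁₂₃⁻¹ and l₀₁₂₃ := e_L yields labelings satisfying both the 2-simplex condition g₀₃ = ∂(h₀₁₃) g₁₃ g₀₁ and the 3-simplex condition ∂(l₀₁₂₃) h₀₂₃ ^{g₂₃}h₀₁₂ = h₀₁₃ h₁₂₃. -/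
/-- A 2-crossed module `L → H → G` (Conduché), following the paper's ten axioms. -/
structure TwoCrossedModule (G H L : Type*) [Group G] [Group H] [Group L] where
  /-- the boundary map `∂ : H → G` -/
  dH : H →* G
  /-- the boundary map `∂ : L → H` -/
  dL : L →* H
  /-- left action of `G` by automorphisms on `H` -/
  aGH : G →* MulAut H
  /-- left action of `G` by automorphisms on `L` -/
  aGL : G →* MulAut L
  /-- left action of `H` by automorphisms on `L` -/
  aHL : H →* MulAut L
  /-- the Peiffer lifting `{-,-} : H × H → L` -/
  pf : H → H → L
  comp_eq_one : ∀ l : L, dH (dL l) = 1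
  dH_equivariant : ∀ (g : G) (h : H), dH (aGH g h) = g * dH h * g⁻¹
  dL_equivariant_G : ∀ (g : G) (l : L), dL (aGL g l) = aGH g (dL l)
  dL_equivariant_H : ∀ (h : H) (l : L), dL (aHL h l) = h * dL l * h⁻¹
  pf_equivariant : ∀ (g : G) (h₂ h₁ : H), aGL g (pf h₂ h₁) = pf (aGH g h₂) (aGH g h₁)
  dL_pf : ∀ h₂ h₁ : H, dL (pf h₂ h₁) = h₂ * h₁ * h₂⁻¹ * (aGH (dH h₂) h₁)⁻¹
  pf_dL_dL : ∀ l₂ l₁ : L, pf (dL l₂) (dL l₁) = l₂ * l₁ * l₂⁻¹ * l₁⁻¹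
  pf_mul_left : ∀ h₃ h₂ h₁ : H,
    pf (h₃ * h₂) h₁ = aHL h₃ (pf h₂ h₁) * pf h₃ (aGH (dH h₂) h₁)
  pf_mul_right : ∀ h₃ h₂ h₁ : H,
    pf h₃ (h₂ * h₁) = pf h₃ h₂ * aHL (aGH (dH h₃) h₂) (pf h₃ h₁)
  act_H_eq : ∀ (h : H) (l : L), aHL h l = l * pf (dL l)⁻¹ h
  act_dH_eq : ∀ (h : H) (l : L), aGL (dH h) l = aHL h l * pf h (dL l)⁻¹
  pf_comm : ∀ (h : H) (l : L), l⁻¹ * aGL (dH h) l = pf (dL l)⁻¹ h * pf h (dL l)⁻¹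

/-- Horn filling `Λ³₂ → Δ³` for the simplicial set associated to a 2-crossed module:
if the given faces satisfy the 2-simplex cocycle conditions, then
`h₀₁₃ := h₀₂₃ · ^{g₂₃}h₀₁₂ · h₁₂₃⁻¹` and `l₀₁₂₃ := e_L` satisfy both the missing
2-simplex condition and the 3-simplex condition. -/
theorem twoCrossedModule_horn32_filler {G H L : Type*} [Group G] [Group H] [Group L]
    (W : TwoCrossedModule G H L)
    (g01 g02 g03 g12 g13 g23 : G) (h012 h023 h123 : H)
    (c012 : g02 = W.dH h012 * g12 * g01)
    (c023 : g03 = W.dH h023 * g23 * g02)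
    (c123 : g13 = W.dH h123 * g23 * g12) :
    g03 = W.dH (h023 * W.aGH g23 h012 * h123⁻¹) * g13 * g01 ∧
    W.dL (1 : L) * h023 * W.aGH g23 h012
      = (h023 * W.aGH g23 h012 * h123⁻¹) * h123 := by
  constructor
  · simp only [map_mul, map_inv, W.dH_equivariant, c012, c023, c123]
    group
  · simp
end

section
/- Let X be a simplicial group, H = XN₁, L = XN₂. Then for h₁, h₂ ∈ H, the element s₁(h₁) s₁(h₂) s₁(h₁)⁻¹ s₀(h₁) s₁(h₂)⁻¹ s₀(h₁)⁻¹ of X₂ lies in XN₂ = Ker(d²₀) ∩ Ker(d²₁), i.e., the Moore-complex Peiffer lifting is well-defined as a map H × H → L. -/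
open CategoryTheory Simplicial

/-!
Both faces are computed factor by factor. The identities `d₁s₁ = d₁s₀ = id` send the word to
`h₁ h₂ h₁⁻¹ h₁ h₂⁻¹ h₁⁻¹ = 1`, while `d₀s₀ = id` and `d₀s₁ = s₀d₀` (which kills `s₁(h)` for
`h ∈ Ker d₀`) send it to `h₁ h₁⁻¹ = 1`.
-/

namespace CategoryTheory.SimplicialObject

variable {C : Type*} [Category C] {FC : C → C → Type*} {CC : C → Type*}
  [∀ X Y, FunLike (FC X Y) (CC X) (CC Y)] [ConcreteCategory C FC] (X : SimplicialObject C)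

lemma δ_σ_of_le_apply {n : ℕ} {i : Fin (n + 2)} {j : Fin (n + 1)} (H : i ≤ j.castSucc)
    (x : ToType (X _⦋n + 1⦌)) : X.δ i.castSucc (X.σ j.succ x) = X.σ j (X.δ i x) := by
  simpa using ConcreteCategory.congr_hom (X.δ_comp_σ_of_le H) x

lemma δ_σ_self_apply {n : ℕ} (i : Fin (n + 1)) (x : ToType (X _⦋n⦌)) :
    X.δ i.castSucc (X.σ i x) = x := by
  simpa using ConcreteCategory.congr_hom (X.δ_comp_σ_self (i := i)) x

lemma δ_σ_succ_apply {n : ℕ} (i : Fin (n + 1)) (x : ToType (X _⦋n⦌)) :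
    X.δ i.succ (X.σ i x) = x := by
  simpa using ConcreteCategory.congr_hom (X.δ_comp_σ_succ (i := i)) x

end CategoryTheory.SimplicialObject

/-- For a simplicial group `X` and `h₁, h₂ ∈ XN₁ = Ker(d¹₀)`, the Moore-complex Peiffer
lifting `s₁(h₁) s₁(h₂) s₁(h₁)⁻¹ s₀(h₁) s₁(h₂)⁻¹ s₀(h₁)⁻¹ ∈ X₂` lies in
`XN₂ = Ker(d²₀) ∩ Ker(d²₁)`. -/
theorem simplicialGroup_pf_mem_moore (X : SimplicialObject GrpCat)
    (h₁ h₂ : X _⦋1⦌) (hh₁ : X.δ (0 : Fin 2) h₁ = 1) (hh₂ : X.δ (0 : Fin 2) h₂ = 1) :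
    X.δ (0 : Fin 3) (X.σ (1 : Fin 2) h₁ * X.σ (1 : Fin 2) h₂ * (X.σ (1 : Fin 2) h₁)⁻¹
      * X.σ (0 : Fin 2) h₁ * (X.σ (1 : Fin 2) h₂)⁻¹ * (X.σ (0 : Fin 2) h₁)⁻¹) = 1 ∧
    X.δ (1 : Fin 3) (X.σ (1 : Fin 2) h₁ * X.σ (1 : Fin 2) h₂ * (X.σ (1 : Fin 2) h₁)⁻¹
      * X.σ (0 : Fin 2) h₁ * (X.σ (1 : Fin 2) h₂)⁻¹ * (X.σ (0 : Fin 2) h₁)⁻¹) = 1 := by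
  have δ₀σ₀ : ∀ x, X.δ (0 : Fin 3) (X.σ (0 : Fin 2) x) = x := X.δ_σ_self_apply 0
  have δ₀σ₁ : ∀ x, X.δ (0 : Fin 3) (X.σ (1 : Fin 2) x) = X.σ 0 (X.δ 0 x) :=
    X.δ_σ_of_le_apply (i := 0) (j := 0) le_rfl
  have δ₁σ₀ : ∀ x, X.δ (1 : Fin 3) (X.σ (0 : Fin 2) x) = x := X.δ_σ_succ_apply 0
  have δ₁σ₁ : ∀ x, X.δ (1 : Fin 3) (X.σ (1 : Fin 2) x) = x := X.δ_σ_self_apply 1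
  constructor
  · simp only [map_mul, map_inv, δ₀σ₀, δ₀σ₁, hh₁, hh₂, map_one]
    group
  · simp only [map_mul, map_inv, δ₁σ₀, δ₁σ₁]
    group
end

section
/- Let (C →∂ B →∂ A, {-,-}_B) be a 2-crossed module. Define G = A, H = B × A, L = C × B, M = C with componentwise products, boundary maps ∂(c) = (c, e_B), ∂(c,b) = (b, e_A), ∂(b,a) = a, and HL-Peiffer lifting {(b₂,a₂), (c₁,b₁)}_HL := c₁ {b₁⁻¹, b₂}_B (^{b₂}c₁)⁻¹ and right-Homanian {(b₃,a₃),(b₂,a₂),(b₁,a₁)}' := {b₃, b₂b₁}_B ^{(^{a₃}b₂)}{b₃,b₁}_B⁻¹ {b₃,b₂}_B⁻¹. Then the axiom {h₂h₁, l}_HL = ^l{∂l⁻¹, h₂, h₁}' · {h₂, l}_HL · ^{h₂}{h₁, l}_HL holds for all h₁, h₂ ∈ H, l ∈ L. -/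
variable {A B C : Type*} [Group A] [Group B] [Group C]

/-- The HL-Peiffer lifting `{(b₂,a₂),(c₁,b₁)}_HL := c₁ {b₁⁻¹,b₂}_B (^{b₂}c₁)⁻¹` of the
candidate 3-crossed module `C → C×B → B×A → A` built from a 2-crossed module `C → B → A`. -/
def hlLift (W : TwoCrossedModule A B C) (h : B × A) (l : C × B) : C :=
  l.1 * W.pf l.2⁻¹ h.1 * (W.aHL h.1 l.1)⁻¹

/-- The right-Homanian
`{(b₃,a₃),(b₂,a₂),(b₁,a₁)}' := {b₃,b₂b₁}_B ^{(^{a₃}b₂)}{b₃,b₁}_B⁻¹ {b₃,b₂}_B⁻¹` of the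
candidate 3-crossed module built from a 2-crossed module. -/
def rHom (W : TwoCrossedModule A B C) (h₃ h₂ h₁ : B × A) : C :=
  W.pf h₃.1 (h₂.1 * h₁.1) * (W.aHL (W.aGH h₃.2 h₂.1) (W.pf h₃.1 h₁.1))⁻¹
    * (W.pf h₃.1 h₂.1)⁻¹

/-- In the candidate 3-crossed module built from a 2-crossed module, the axiom
`{h₂h₁, l}_HL = ^l{∂l⁻¹, h₂, h₁}' · {h₂, l}_HL · ^{h₂}{h₁, l}_HL` holds,
where `∂(c,b) = (b, e_A)`, `L = C×B` acts on `M = C` by conjugation through the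
`C`-component and `H = B×A` acts on `M = C` through its `B`-component. -/
theorem hlLift_mul_left (W : TwoCrossedModule A B C) :
    ∀ (h₁ h₂ : B × A) (l : C × B),
      hlLift W (h₂ * h₁) l
        = l.1 * rHom W ((l.2⁻¹, (1 : A)) : B × A) h₂ h₁ * l.1⁻¹
          * hlLift W h₂ l * W.aHL h₂.1 (hlLift W h₁ l) := by
  intro h₁ h₂ l
  simp only [hlLift, rHom, Prod.fst_mul, map_one, MulAut.one_apply, map_mul,
    MulAut.mul_apply, mul_inv_rev, map_inv]
  group
end

section
/- Let (C →∂ B →∂ A, {-,-}_B) be a 2-crossed module and form the candidate 3-crossed module M = C, L = C × B, H = B × A, G = A as in the paper, with LL-Peiffer lifting {(c₂,b₂),(c₁,b₁)}_LL := c₂ c₁ c₂⁻¹ (^{b₂}c₁)⁻¹. Then the axioms {l₃l₂, l₁}_LL = ^{l₃}{l₂,l₁}_LL · {l₃, ^{∂l₂}l₁}_LL and {l₃, l₂l₁}_LL = {l₃,l₂}_LL · ^{(^{∂l₃}l₂)}{l₃,l₁}_LL hold, where ∂(c,b) = (b, e_A), the action of ∂l on l' is via the B-component acting on C×B componentwise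 (conjugation on C via the B-action, conjugation in B), and L acts on M = C by conjugation through the C-component. -/
variable {A B C : Type*} [Group A] [Group B] [Group C]

/-- The LL-Peiffer lifting `{(c₂,b₂),(c₁,b₁)}_LL := c₂ c₁ c₂⁻¹ (^{b₂}c₁)⁻¹` of the
candidate 3-crossed module `C → C×B → B×A → A` built from a 2-crossed module `C → B → A`. -/
def llLift (W : TwoCrossedModule A B C) (l₂ l₁ : C × B) : C :=
  l₂.1 * l₁.1 * l₂.1⁻¹ * (W.aHL l₂.2 l₁.1)⁻¹

/-- In the candidate 3-crossed module built from a 2-crossed module, the LL-Peiffer lifting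
satisfies `{l₃l₂, l₁}_LL = ^{l₃}{l₂,l₁}_LL · {l₃, ^{∂l₂}l₁}_LL` and
`{l₃, l₂l₁}_LL = {l₃,l₂}_LL · ^{(^{∂l₃}l₂)}{l₃,l₁}_LL`, where `∂(c,b) = (b, e_A)`,
`H = B×A` acts on `L = C×B` componentwise (via the `B`-action on `C` and conjugation in `B`)
and `L = C×B` acts on `M = C` by conjugation through the `C`-component. -/
theorem llLift_mul (W : TwoCrossedModule A B C) :
    ∀ l₃ l₂ l₁ : C × B,
      llLift W (l₃ * l₂) l₁
        = l₃.1 * llLift W l₂ l₁ * l₃.1⁻¹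
          * llLift W l₃ ((W.aHL l₂.2 l₁.1, l₂.2 * l₁.2 * l₂.2⁻¹) : C × B) ∧
      llLift W l₃ (l₂ * l₁)
        = llLift W l₃ l₂ * (W.aHL l₃.2 l₂.1 * llLift W l₃ l₁ * (W.aHL l₃.2 l₂.1)⁻¹) := by
  intro l₃ l₂ l₁
  constructor <;>
  · simp only [llLift, Prod.fst_mul, Prod.snd_mul, map_mul, MulAut.mul_apply, mul_inv_rev]
    group
end
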